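/- For every F ∈ CB^∞(ℝⁿ, A), every φ ∈ S_A and every x ∈ ℝⁿ, the deformed product equals the action of the pseudodifferential operator with symbol F(x − Jξ): F ×_J φ(x) = ∫_{ℝⁿ} e^{i x·ξ} F(x − Jξ) φ̂(ξ) d̄ξ, where the right-hand integral converges absolutely. -/

import Mathlib

open MeasureTheory Complex Filter Metric
open scoped ContDiff

noncomputable section

/-- `En n` is the Euclidean space `ℝⁿ`. -/
abbrev En (n : ℕ) : Type := EuclideanSpace ℝ (Fin n)

/-- `CBInfty f` says that `f` is smooth and all of its derivatives
(including `f` itself) are bounded. -/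
def CBInfty {E F : Type*} [NormedAddCommGroup E] [NormedSpace ℝ E]
    [NormedAddCommGroup F] [NormedSpace ℝ F] (f : E → F) : Prop :=
  ContDiff ℝ ∞ f ∧ ∀ k : ℕ, ∃ C : ℝ, ∀ x, ‖iteratedFDeriv ℝ k f x‖ ≤ C

variable {n : ℕ} (A : Type*) [NormedRing A] [StarRing A] [CStarRing A]
  [CompleteSpace A] [NormedAlgebra ℂ A] [StarModule ℂ A]

/-- The Fourier transform `φ̂(ξ) = (2π)^{-n/2} ∫ e^{-i y·ξ} φ(y) dy`. -/
def fourierA (φ : En n → A) (ξ : En n) : A :=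
  (2 * Real.pi) ^ (-(n : ℝ) / 2) •
    ∫ y : En n, Complex.exp (-(Complex.I * ((inner ℝ y ξ : ℝ) : ℂ))) • φ y

/-- The pseudodifferential operator with symbol `a`:
`a(x,D)φ(x) = (2π)^{-n/2} ∫ e^{i x·ξ} a(x,ξ) φ̂(ξ) dξ`. -/
def psdo (a : En n × En n → A) (φ : En n → A) (x : En n) : A :=
  (2 * Real.pi) ^ (-(n : ℝ) / 2) •
    ∫ ξ : En n, Complex.exp (Complex.I * ((inner ℝ x ξ : ℝ) : ℂ)) • (a (x, ξ) * fourierA A φ ξ)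

/-- `‖f‖₂ = ‖∫ f(x)* f(x) dx‖^{1/2}`, the norm associated to the `A`-valued
inner product `⟨f,g⟩ = ∫ f(x)* g(x) dx`. -/
def normTwo {X : Type*} [MeasureSpace X] (f : X → A) : ℝ :=
  Real.sqrt ‖∫ x : X, star (f x) * f x‖

/-- Directional (partial) derivative of `f` in the direction `v`. -/
def pderivV {E F : Type*} [NormedAddCommGroup E] [NormedSpace ℝ E]
    [NormedAddCommGroup F] [NormedSpace ℝ F] (v : E) (f : E → F) : E → F :=
  fun x => fderiv ℝ f x v

/-- Iterated directional derivatives along a list of directions. -/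
def multiPderiv {E F : Type*} [NormedAddCommGroup E] [NormedSpace ℝ E]
    [NormedAddCommGroup F] [NormedSpace ℝ F] (vs : List E) (f : E → F) : E → F :=
  vs.foldr pderivV f

/-- The mixed partial derivative `∂^β_x ∂^γ_ξ a`, where `β, γ ∈ {0,1}^n` are
encoded as boolean vectors. -/
def mixedPderiv (β γ : Fin n → Bool) (a : En n × En n → A) : En n × En n → A :=
  multiPderiv
    ((((List.finRange n).filter fun j => β j).map
        fun j => ((EuclideanSpace.single j (1 : ℝ) : En n), (0 : En n))) ++
      (((List.finRange n).filter fun j => γ j).map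
        fun j => ((0 : En n), (EuclideanSpace.single j (1 : ℝ) : En n)))) a

/-- `π(a) = sup { ‖∂^β_x ∂^γ_ξ a(x,ξ)‖ : (x,ξ) ∈ ℝ^{2n}, β, γ ≤ (1,…,1) }`. -/
def symbNorm (a : En n × En n → A) : ℝ :=
  ⨆ q : ((Fin n → Bool) × (Fin n → Bool)) × (En n × En n),
    ‖mixedPderiv A q.1.1 q.1.2 a q.2‖


/-- The matrix `J` acting on the Euclidean space `ℝⁿ`. -/
def matVec (J : Matrix (Fin n) (Fin n) ℝ) (u : En n) : En n :=
  (EuclideanSpace.equiv (Fin n) ℝ).symm (J.mulVec (EuclideanSpace.equiv (Fin n) ℝ u))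

/-- The deformed (Rieffel) product
`F ×_J φ(x) = (2π)^{-n} ∫ F(x + Ju) (∫ e^{i u·v} φ(x + v) dv) du`. -/
def rieffel (J : Matrix (Fin n) (Fin n) ℝ) (F φ : En n → A) (x : En n) : A :=
  (2 * Real.pi) ^ (-(n : ℝ)) •
    ∫ u : En n, F (x + matVec J u) *
      ∫ v : En n, Complex.exp (Complex.I * ((inner ℝ u v : ℝ) : ℂ)) • φ (x + v)

open scoped FourierTransform RealInnerProductSpace

set_option linter.unusedSectionVars false
set_option linter.unusedVariables false

lemma twopi_pos : (0:ℝ) < 2 * Real.pi := by positivity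

lemma fourierA_eq (φ : En n → A) (ξ : En n) :
    fourierA A φ ξ = (2 * Real.pi) ^ (-(n : ℝ) / 2) • 𝓕 φ ((2 * Real.pi)⁻¹ • ξ) := by
  rw [Real.fourier_eq]
  unfold fourierA
  congr 1
  congr 1
  funext y
  rw [Circle.smul_def, Real.fourierChar_apply, real_inner_smul_right]
  congr 1
  have h : 2 * Real.pi * -((2 * Real.pi)⁻¹ * (inner ℝ y ξ : ℝ)) = -(inner ℝ y ξ : ℝ) := by
    field_simp
  rw [h]
  push_cast
  ring

lemma fourierA_integrable (φ : SchwartzMap (En n) A) : Integrable (fourierA A ⇑φ) := by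
  have h1 : Integrable (𝓕 ⇑φ) := by
    simpa [SchwartzMap.fourier_coe] using (SchwartzMap.fourierTransformCLM ℂ φ).integrable
  have h2 : Integrable (fun ξ : En n => 𝓕 ⇑φ ((2 * Real.pi)⁻¹ • ξ)) :=
    h1.comp_smul (inv_ne_zero (ne_of_gt twopi_pos))
  have h3 := h2.smul ((2 * Real.pi) ^ (-(n : ℝ) / 2))
  have he : fourierA A ⇑φ = fun ξ => (2 * Real.pi) ^ (-(n : ℝ) / 2) • 𝓕 ⇑φ ((2 * Real.pi)⁻¹ • ξ) :=
    funext (fourierA_eq A ⇑φ)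
  rw [he]
  exact h3


lemma fourierA_continuous (φ : SchwartzMap (En n) A) : Continuous (fourierA A ⇑φ) := by
  have h1 : Continuous (𝓕 ⇑φ) := by
    have := (SchwartzMap.fourierTransformCLM ℂ φ).continuous
    simpa [SchwartzMap.fourier_coe] using this
  have he : fourierA A ⇑φ = fun ξ => (2 * Real.pi) ^ (-(n : ℝ) / 2) • 𝓕 ⇑φ ((2 * Real.pi)⁻¹ • ξ) :=
    funext (fourierA_eq A ⇑φ)
  rw [he]
  exact (h1.comp (continuous_const_smul _)).const_smul _

lemma matVec_continuous (J : Matrix (Fin n) (Fin n) ℝ) : Continuous (matVec (n := n) J) := by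
  unfold matVec
  exact (EuclideanSpace.equiv (Fin n) ℝ).symm.continuous.comp
    ((J.mulVecLin.continuous_of_finiteDimensional).comp
      (EuclideanSpace.equiv (Fin n) ℝ).continuous)

lemma matVec_neg (J : Matrix (Fin n) (Fin n) ℝ) (u : En n) :
    matVec J (-u) = - matVec J u := by
  simp [matVec, Matrix.mulVec_neg]


/-- For every `F ∈ CB^∞(ℝⁿ, A)`, `φ ∈ S_A` and `x ∈ ℝⁿ`, the deformed product
equals the action of the pseudodifferential operator with symbol `F(x − Jξ)`:
`F ×_J φ(x) = (2π)^{-n/2} ∫ e^{i x·ξ} F(x − Jξ) φ̂(ξ) d̄ξ`,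
the right-hand integral converging absolutely. -/
theorem rieffel_eq_psdo (J : Matrix (Fin n) (Fin n) ℝ) (hJ : J.transpose = -J)
    (F : En n → A) (hF : CBInfty F) (φ : SchwartzMap (En n) A) (x : En n) :
    Integrable (fun ξ : En n =>
        Complex.exp (Complex.I * ((inner ℝ x ξ : ℝ) : ℂ)) •
          (F (x - matVec J ξ) * fourierA A ⇑φ ξ)) ∧
      rieffel A J F ⇑φ x =
        (2 * Real.pi) ^ (-(n : ℝ) / 2) •
          ∫ ξ : En n, Complex.exp (Complex.I * ((inner ℝ x ξ : ℝ) : ℂ)) •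
            (F (x - matVec J ξ) * fourierA A ⇑φ ξ) := by
  obtain ⟨C, hC⟩ := hF.2 0
  have hFb : ∀ y, ‖F y‖ ≤ C := fun y => by
    simpa [norm_iteratedFDeriv_zero] using hC y
  have hint : Integrable (fun ξ : En n =>
      Complex.exp (Complex.I * ((inner ℝ x ξ : ℝ) : ℂ)) •
        (F (x - matVec J ξ) * fourierA A ⇑φ ξ)) := by
    have hcont : Continuous fun ξ : En n =>
        Complex.exp (Complex.I * ((inner ℝ x ξ : ℝ) : ℂ)) •
          (F (x - matVec J ξ) * fourierA A ⇑φ ξ) := by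
      apply Continuous.smul
      · exact Complex.continuous_exp.comp (continuous_const.mul
          (Complex.continuous_ofReal.comp (continuous_const.inner continuous_id)))
      · exact ((hF.1.continuous).comp (continuous_const.sub (matVec_continuous J))).mul
          (fourierA_continuous A φ)
    refine (((fourierA_integrable A φ).norm.const_mul C).mono'
      hcont.aestronglyMeasurable ?_)
    filter_upwards with ξ
    rw [norm_smul]
    have h1 : ‖Complex.exp (Complex.I * ((inner ℝ x ξ : ℝ) : ℂ))‖ = 1 := by
      simp [Complex.norm_exp]
    rw [h1, one_mul]
    calc ‖F (x - matVec J ξ) * fourierA A ⇑φ ξ‖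
        ≤ ‖F (x - matVec J ξ)‖ * ‖fourierA A ⇑φ ξ‖ := norm_mul_le _ _
      _ ≤ C * ‖fourierA A ⇑φ ξ‖ :=
          mul_le_mul_of_nonneg_right (hFb _) (norm_nonneg _)
  refine ⟨hint, ?_⟩
  unfold rieffel
  have key : ∀ u : En n,
      (∫ v : En n, Complex.exp (Complex.I * ((inner ℝ u v : ℝ) : ℂ)) • φ (x + v))
        = Complex.exp (-(Complex.I * ((inner ℝ u x : ℝ) : ℂ))) •
            ((2 * Real.pi) ^ ((n : ℝ) / 2) • fourierA A ⇑φ (-u)) := by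
    intro u
    have tr : (∫ v : En n, Complex.exp (Complex.I * ((inner ℝ u v : ℝ) : ℂ)) • φ (x + v))
        = ∫ w : En n, Complex.exp (Complex.I * ((inner ℝ u (w - x) : ℝ) : ℂ)) • φ w := by
      rw [← integral_add_left_eq_self
        (fun w : En n => Complex.exp (Complex.I * ((inner ℝ u (w - x) : ℝ) : ℂ)) • φ w) x]
      congr 1
      funext v
      simp
    rw [tr]
    have hpt : ∀ w : En n, Complex.exp (Complex.I * ((inner ℝ u (w - x) : ℝ) : ℂ)) • φ w
        = Complex.exp (-(Complex.I * ((inner ℝ u x : ℝ) : ℂ))) •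
            (Complex.exp (Complex.I * ((inner ℝ u w : ℝ) : ℂ)) • φ w) := by
      intro w
      rw [smul_smul, ← Complex.exp_add, inner_sub_right]
      congr 2
      push_cast
      ring
    simp_rw [hpt]
    rw [integral_smul]
    congr 1
    unfold fourierA
    rw [smul_smul, ← Real.rpow_add twopi_pos]
    have he : (n : ℝ) / 2 + -(n : ℝ) / 2 = 0 := by ring
    rw [he, Real.rpow_zero, one_smul]
    congr 1
    funext y
    congr 2
    rw [inner_neg_right, real_inner_comm]
    push_cast
    ring
  simp_rw [key, mul_smul_comm, smul_comm (Complex.exp _)]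
  rw [integral_smul, smul_smul, ← Real.rpow_add twopi_pos]
  have he2 : -(n : ℝ) + (n : ℝ) / 2 = -(n : ℝ) / 2 := by ring
  rw [he2]
  congr 1
  rw [← integral_neg_eq_self
    (fun ξ : En n => Complex.exp (Complex.I * ((inner ℝ x ξ : ℝ) : ℂ)) •
      (F (x - matVec J ξ) * fourierA A ⇑φ ξ)) volume]
  congr 1
  funext u
  have hi : ((inner ℝ x (-u) : ℝ) : ℂ) = -((inner ℝ u x : ℝ) : ℂ) := by
    rw [inner_neg_right, real_inner_comm]
    push_cast
    ring
  rw [hi, matVec_neg, sub_neg_eq_add]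
  congr 1
  ring


end
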